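/- arXiv:1212.6342 — 2 statements merged into one kernel-verified Lean document; each statement's English description precedes it below -/
import Mathlib

section
/- Let γ < −1 be fixed and M > 0. Then there exist constants c, C > 0 such that for all 0 < T ≤ S < ∞ and 0 < w ≤ M, the integral J_γ(T,S,w) = ∫_T^S t^γ/(t²+w²) dt satisfies c·((S−T)/S)·T^{γ+1}/(max(T,w))² ≤ J_γ(T,S,w) ≤ C·((S−T)/S)·T^{γ+1}/(max(T,w))². -/
/-!
With `β = -(γ + 1) > 0`: on `[T, S]` we have `max T w ^ 2 ≤ t ^ 2 + w ^ 2`, so the upper bound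
reduces to `∫_T^S t^γ = T^(γ+1) (1 - (T/S)^β) / β`, and `1 - r^β ≤ max 1 β * (1 - r)` for
`0 < r ≤ 1` (Bernoulli when `β ≥ 1`). For the lower bound, integrate only over
`[T, min S (2T)]`, where `t^γ ≥ (2T)^γ` and `t² + w² ≤ 8 max(T, w)²`; this interval has length
at least `(S - T) / S * T`.
-/

open Real MeasureTheory intervalIntegral

theorem one_sub_rpow_le_max_mul {r : ℝ} (p : ℝ) (hr0 : 0 < r) (hr1 : r ≤ 1) :
    1 - r ^ p ≤ max 1 p * (1 - r) := by
  rcases le_total p 1 with hp1 | hp1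
  · have : r ≤ r ^ p := by simpa using rpow_le_rpow_of_exponent_ge hr0 hr1 hp1
    nlinarith [le_max_left 1 p]
  · have hbern := one_add_mul_self_le_rpow_one_add (s := r - 1) (by linarith) hp1
    rw [add_sub_cancel] at hbern
    rw [max_eq_right hp1]
    linarith

section

variable {γ w T S : ℝ}

theorem integral_rpow_le_of_lt_neg_one (hγ : γ < -1) (hT : 0 < T) (hTS : T ≤ S) :
    ∫ t in T..S, t ^ γ ≤ max 1 (-(γ + 1)) / -(γ + 1) * ((S - T) / S * T ^ (γ + 1)) := by
  have hS : 0 < S := hT.trans_le hTS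
  have hp : 0 < -(γ + 1) := by linarith
  have hSpow : S ^ (γ + 1) = T ^ (γ + 1) * (T / S) ^ (-(γ + 1)) := by
    rw [div_rpow hT.le hS.le, rpow_neg hT.le, rpow_neg hS.le]
    field_simp [(rpow_pos_of_pos hT (γ + 1)).ne']
  have hratio : 1 - T / S = (S - T) / S := by field_simp
  have key := one_sub_rpow_le_max_mul (-(γ + 1)) (div_pos hT hS) ((div_le_one hS).2 hTS)
  rw [hratio] at key
  rw [integral_rpow (Or.inr ⟨by linarith, Set.notMem_uIcc_of_lt hT hS⟩), hSpow,
    div_mul_eq_mul_div, le_div_iff₀ hp]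
  calc (T ^ (γ + 1) * (T / S) ^ (-(γ + 1)) - T ^ (γ + 1)) / (γ + 1) * -(γ + 1)
      = T ^ (γ + 1) * (1 - (T / S) ^ (-(γ + 1))) := by
        field_simp [(show γ + 1 ≠ 0 by linarith)]; ring
    _ ≤ T ^ (γ + 1) * (max 1 (-(γ + 1)) * ((S - T) / S)) := by gcongr
    _ = max 1 (-(γ + 1)) * ((S - T) / S * T ^ (γ + 1)) := by ring

theorem continuousOn_rpow_div_sq_add_sq {a b : ℝ} (ha : 0 < a) :
    ContinuousOn (fun t => t ^ γ / (t ^ 2 + w ^ 2)) (Set.Icc a b) := by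
  have hpos : ∀ t ∈ Set.Icc a b, 0 < t := fun t ht => ha.trans_le ht.1
  refine ContinuousOn.div ?_ (by fun_prop) fun t ht => by have := hpos t ht; positivity
  exact fun t ht => (continuousAt_rpow_const t γ (Or.inl (hpos t ht).ne')).continuousWithinAt

theorem intervalIntegrable_rpow_div_sq_add_sq {a b : ℝ} (ha : 0 < a) (hab : a ≤ b) :
    IntervalIntegrable (fun t => t ^ γ / (t ^ 2 + w ^ 2)) volume a b :=
  (continuousOn_rpow_div_sq_add_sq ha).intervalIntegrable_of_Icc hab

theorem sq_max_le_sq_add_sq {t : ℝ} (hT : 0 ≤ T) (hTt : T ≤ t) :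
    max T w ^ 2 ≤ t ^ 2 + w ^ 2 := by
  rcases max_cases T w with ⟨h, _⟩ | ⟨h, _⟩ <;> rw [h] <;> nlinarith

theorem integral_rpow_div_sq_add_sq_le (hγ : γ < -1) (hT : 0 < T) (hTS : T ≤ S) :
    ∫ t in T..S, t ^ γ / (t ^ 2 + w ^ 2) ≤
      max 1 (-(γ + 1)) / -(γ + 1) * ((S - T) / S * (T ^ (γ + 1) / max T w ^ 2)) := by
  calc ∫ t in T..S, t ^ γ / (t ^ 2 + w ^ 2)
      ≤ ∫ t in T..S, t ^ γ / max T w ^ 2 := by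
        refine integral_mono_on hTS (intervalIntegrable_rpow_div_sq_add_sq hT hTS)
          ((intervalIntegrable_rpow (Or.inr
            (Set.notMem_uIcc_of_lt hT (hT.trans_le hTS)))).div_const _) fun t ht => ?_
        have ht0 : 0 < t := hT.trans_le ht.1
        exact div_le_div_of_nonneg_left (rpow_nonneg ht0.le γ) (by positivity)
          (sq_max_le_sq_add_sq hT.le ht.1)
    _ = (∫ t in T..S, t ^ γ) / max T w ^ 2 := integral_div _ _
    _ ≤ max 1 (-(γ + 1)) / -(γ + 1) * ((S - T) / S * T ^ (γ + 1)) / max T w ^ 2 := by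
        gcongr; exact integral_rpow_le_of_lt_neg_one hγ hT hTS
    _ = _ := by ring

theorem sub_div_mul_le_min_two_mul_sub (hT : 0 < T) (hTS : T ≤ S) :
    (S - T) / S * T ≤ min S (2 * T) - T := by
  have hS : 0 < S := hT.trans_le hTS
  rw [div_mul_eq_mul_div, div_le_iff₀ hS]
  rcases min_cases S (2 * T) with ⟨h, _⟩ | ⟨h, _⟩ <;> rw [h] <;> nlinarith

theorem le_integral_rpow_div_sq_add_sq (hγ : γ ≤ 0) (hT : 0 < T) (hTS : T ≤ S) (hw : 0 ≤ w) :
    2 ^ γ / 8 * ((S - T) / S * (T ^ (γ + 1) / max T w ^ 2)) ≤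
      ∫ t in T..S, t ^ γ / (t ^ 2 + w ^ 2) := by
  set S' := min S (2 * T)
  set m := max T w
  have hTS' : T ≤ S' := le_min hTS (by linarith)
  have hS'S : S' ≤ S := min_le_left _ _
  have hbound : ∀ t ∈ Set.Icc T S', (2 * T) ^ γ / (8 * m ^ 2) ≤ t ^ γ / (t ^ 2 + w ^ 2) := by
    intro t ht
    have ht0 : 0 < t := hT.trans_le ht.1
    have ht2 : t ≤ 2 * T := ht.2.trans (min_le_right _ _)
    have hden : t ^ 2 + w ^ 2 ≤ 8 * m ^ 2 := by
      nlinarith [le_max_left T w, le_max_right T w]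
    exact div_le_div₀ (rpow_nonneg ht0.le γ) (rpow_le_rpow_of_nonpos ht0 ht2 hγ)
      (by positivity) hden
  have hnonneg : ∀ t ∈ Set.Ioc T S, 0 ≤ t ^ γ / (t ^ 2 + w ^ 2) := fun t ht =>
    div_nonneg (rpow_nonneg (hT.trans ht.1).le γ) (by positivity)
  calc 2 ^ γ / 8 * ((S - T) / S * (T ^ (γ + 1) / m ^ 2))
      = (S - T) / S * T * ((2 * T) ^ γ / (8 * m ^ 2)) := by
        rw [mul_rpow zero_le_two hT.le, rpow_add_one hT.ne']; ring
    _ ≤ (S' - T) * ((2 * T) ^ γ / (8 * m ^ 2)) := by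
        gcongr; exact sub_div_mul_le_min_two_mul_sub hT hTS
    _ = ∫ t in T..S', (2 * T) ^ γ / (8 * m ^ 2) := by simp [mul_div_assoc]
    _ ≤ ∫ t in T..S', t ^ γ / (t ^ 2 + w ^ 2) :=
        integral_mono_on hTS' intervalIntegrable_const
          (intervalIntegrable_rpow_div_sq_add_sq hT hTS') hbound
    _ ≤ ∫ t in T..S, t ^ γ / (t ^ 2 + w ^ 2) :=
        integral_mono_interval le_rfl hTS' hS'S
          ((ae_restrict_iff' measurableSet_Ioc).2 (Filter.Eventually.of_forall hnonneg))
          (intervalIntegrable_rpow_div_sq_add_sq hT hTS)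

end

theorem stmt5_general (γ M : ℝ) (hγ : γ < -1) :
    ∃ c C : ℝ, 0 < c ∧ 0 < C ∧ ∀ T S w : ℝ, 0 < T → T ≤ S → 0 < w → w ≤ M →
      c * ((S - T) / S * (T ^ (γ + 1) / (max T w) ^ 2)) ≤ (∫ t in T..S, t ^ γ / (t ^ 2 + w ^ 2)) ∧
      (∫ t in T..S, t ^ γ / (t ^ 2 + w ^ 2)) ≤ C * ((S - T) / S * (T ^ (γ + 1) / (max T w) ^ 2)) := by
  have hp : 0 < -(γ + 1) := by linarith
  refine ⟨2 ^ γ / 8, max 1 (-(γ + 1)) / -(γ + 1), by positivity, by positivity, ?_⟩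
  intro T S w hT hTS hw _
  exact ⟨le_integral_rpow_div_sq_add_sq (by linarith) hT hTS hw.le,
    integral_rpow_div_sq_add_sq_le hγ hT hTS⟩

theorem stmt5 (γ M : ℝ) (hγ : γ < -1) (hM : 0 < M) :
    ∃ c C : ℝ, 0 < c ∧ 0 < C ∧ ∀ T S w : ℝ, 0 < T → T ≤ S → 0 < w → w ≤ M →
      c * ((S - T) / S * (T ^ (γ + 1) / (max T w) ^ 2)) ≤ (∫ t in T..S, t ^ γ / (t ^ 2 + w ^ 2)) ∧
      (∫ t in T..S, t ^ γ / (t ^ 2 + w ^ 2)) ≤ C * ((S - T) / S * (T ^ (γ + 1) / (max T w) ^ 2)) :=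
  stmt5_general γ M hγ
end

section
/- Let 0 < σ < 1/2 and let α, β > −1 with δ := max(α+1, β+1, 1/2). For 1 ≤ q < δ/(δ−σ), one has sup_{0<φ<π} ∫₀^π ((θ+φ)^{−2α−1}(2π−θ−φ)^{−2β−1}|θ−φ|^{2σ−1})^q dμ_{α,β}(θ) < ∞. Consequently, the integral operator with kernel K₆(θ,φ) = (θ+φ)^{−2α−1}(2π−θ−φ)^{−2β−1}|θ−φ|^{2σ−1} is bounded from L¹(dμ_{α,β}) to L^q(dμ_{α,β}) for every such q. -/
/-!
On `(0, π)²` the integrand `K₆(θ, φ)^q` times the Jacobi density is dominated by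
`C (θ^(-s) + (π - θ)^(-s) + |θ - φ|^(-s))` for a single exponent `s < 1`, and such a function is
integrable in `θ` uniformly in `φ`. Near `θ = 0` the density is comparable to `θ^(2α+1)` and the
factors carrying `β` are bounded, so one has to control
`(θ + φ)^(-(2α+1)q) θ^(2α+1) |θ - φ|^(-(1-2σ)q)`; for `2α + 1 ≥ 0` bound `θ + φ` below by `θ`, for
`2α + 1 < 0` above by `2θ + |θ - φ|`. Either way one gets a product of negative powers of `θ` and
`|θ - φ|` of total order at most `(2δ - 1)(q - 1) + (1 - 2σ)q`, and `q < δ / (δ - σ)` is exactly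
the condition that this order is `< 1`. The reflection `θ ↦ π - θ` exchanges `α` and `β` and
handles `θ` near `π`.

The `L¹ → L^q` bound is Minkowski's integral inequality: Hölder's inequality with respect to
`|f| dμ` gives `|Tf(θ)|^q ≤ ‖f‖₁^(q-1) ∫ K(θ, φ)^q |f(φ)| dμ(φ)`, and Tonelli finishes.
-/

open Real MeasureTheory Set
open scoped ENNReal

noncomputable def jacobiMeasure (α β : ℝ) : Measure ℝ :=
  (volume.restrict (Set.Ioo 0 π)).withDensity
    (fun φ => ENNReal.ofReal ((Real.sin (φ / 2)) ^ (2 * α + 1) * (Real.cos (φ / 2)) ^ (2 * β + 1)))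

section KernelOperator

variable {X Y : Type*} [MeasurableSpace X] [MeasurableSpace Y]

theorem rpow_lintegral_mul_le_lintegral_rpow_mul {μ : Measure X} {g h : X → ℝ≥0∞}
    (hg : AEMeasurable g μ) (hh : AEMeasurable h μ) {q : ℝ} (hq : 1 ≤ q) :
    (∫⁻ x, g x * h x ∂μ) ^ q ≤ (∫⁻ x, g x ^ q * h x ∂μ) * (∫⁻ x, h x ∂μ) ^ (q - 1) := by
  rcases hq.eq_or_lt with rfl | hq
  · simp
  have hpq := Real.HolderConjugate.conjExponent hq
  have hν : ∀ {k : X → ℝ≥0∞}, AEMeasurable k μ → ∫⁻ x, k x ∂μ.withDensity h = ∫⁻ x, k x * h x ∂μ :=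
    fun hk => by simp_rw [lintegral_withDensity_eq_lintegral_mul₀ hh hk, Pi.mul_apply, mul_comm]
  -- Hölder's inequality for `g` and `1` with respect to the measure `h μ`
  have holder := ENNReal.lintegral_mul_le_Lp_mul_Lq (μ.withDensity h) hpq
    (hg.mono_ac (withDensity_absolutelyContinuous _ _)) aemeasurable_const (g := 1)
  simp only [Pi.mul_apply, Pi.one_apply, mul_one, ENNReal.one_rpow] at holder
  rw [hν hg, hν (hg.pow_const q), hν aemeasurable_const] at holder
  simp only [one_mul] at holder
  calc (∫⁻ x, g x * h x ∂μ) ^ q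
      ≤ ((∫⁻ x, g x ^ q * h x ∂μ) ^ (1 / q) * (∫⁻ x, h x ∂μ) ^ (1 / q.conjExponent)) ^ q := by
        gcongr
    _ = _ := by
        rw [ENNReal.mul_rpow_of_nonneg _ _ (by linarith), ← ENNReal.rpow_mul, ← ENNReal.rpow_mul,
          one_div_mul_cancel (by linarith), ENNReal.rpow_one, one_div, ← div_eq_inv_mul,
          hpq.div_conj_eq_sub_one]

theorem eLpNorm_integral_mul_le {μ : Measure X} {ν : Measure Y} [SFinite μ] [SFinite ν]
    {K : X → Y → ℝ} {f : Y → ℝ} {q : ℝ} {C : ℝ≥0∞} (hK : Measurable (Function.uncurry K))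
    (hf : AEMeasurable f ν) (hq : 1 ≤ q) (hKC : ∀ᵐ y ∂ν, ∫⁻ x, ‖K x y‖ₑ ^ q ∂μ ≤ C) :
    eLpNorm (fun x => ∫ y, K x y * f y ∂ν) (ENNReal.ofReal q) μ
      ≤ C ^ (1 / q) * ∫⁻ y, ‖f y‖ₑ ∂ν := by
  have hq0 : 0 < q := by linarith
  set F := ∫⁻ y, ‖f y‖ₑ ∂ν
  have hKq : Measurable (Function.uncurry fun x y => ‖K x y‖ₑ ^ q) := hK.enorm.pow_const q
  have hprod : AEMeasurable (Function.uncurry fun x y => ‖K x y‖ₑ ^ q * ‖f y‖ₑ) (μ.prod ν) :=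
    hKq.aemeasurable.mul
      (hf.enorm.comp_quasiMeasurePreserving Measure.quasiMeasurePreserving_snd)
  have pointwise : ∀ x, ‖∫ y, K x y * f y ∂ν‖ₑ ^ q
      ≤ (∫⁻ y, ‖K x y‖ₑ ^ q * ‖f y‖ₑ ∂ν) * F ^ (q - 1) := fun x =>
    calc ‖∫ y, K x y * f y ∂ν‖ₑ ^ q ≤ (∫⁻ y, ‖K x y‖ₑ * ‖f y‖ₑ ∂ν) ^ q := by
          gcongr
          simpa only [enorm_mul] using enorm_integral_le_lintegral_enorm (fun y => K x y * f y)
      _ ≤ _ := rpow_lintegral_mul_le_lintegral_rpow_mul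
          (hK.of_uncurry_left.enorm.aemeasurable) hf.enorm hq
  have integrated : ∫⁻ x, ‖∫ y, K x y * f y ∂ν‖ₑ ^ q ∂μ ≤ C * F ^ q :=
    calc ∫⁻ x, ‖∫ y, K x y * f y ∂ν‖ₑ ^ q ∂μ
        ≤ (∫⁻ x, ∫⁻ y, ‖K x y‖ₑ ^ q * ‖f y‖ₑ ∂ν ∂μ) * F ^ (q - 1) := by
          refine (lintegral_mono pointwise).trans_eq (lintegral_mul_const'' _ ?_)
          exact hprod.lintegral_prod_right'
      _ = (∫⁻ y, (∫⁻ x, ‖K x y‖ₑ ^ q ∂μ) * ‖f y‖ₑ ∂ν) * F ^ (q - 1) := by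
          rw [lintegral_lintegral_swap hprod]
          simp_rw [lintegral_mul_const _ hKq.of_uncurry_right]
      _ ≤ (∫⁻ y, C * ‖f y‖ₑ ∂ν) * F ^ (q - 1) := by
          gcongr ?_ * _
          exact lintegral_mono_ae (hKC.mono fun y hy => by gcongr)
      _ = C * (F ^ (1 : ℝ) * F ^ (q - 1)) := by
          rw [lintegral_const_mul'' _ hf.enorm, ENNReal.rpow_one, mul_assoc]
      _ = C * F ^ q := by
          rw [← ENNReal.rpow_add_of_nonneg _ _ zero_le_one (by linarith), add_sub_cancel]
  rw [eLpNorm_eq_lintegral_rpow_enorm_toReal (by simpa using hq0) ENNReal.ofReal_ne_top,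
    ENNReal.toReal_ofReal hq0.le]
  calc _ ≤ (C * F ^ q) ^ (1 / q) := by gcongr
    _ = C ^ (1 / q) * F := by
        rw [ENNReal.mul_rpow_of_nonneg _ _ (by positivity), ← ENNReal.rpow_mul,
          mul_one_div_cancel hq0.ne', ENNReal.rpow_one]

end KernelOperator

theorem rpow_neg_le_mul_rpow_neg {x L t s : ℝ} (hx : 0 < x) (hxL : x ≤ L) (hts : t ≤ s) :
    x ^ (-t) ≤ L ^ (s - t) * x ^ (-s) := by
  rw [show -t = (s - t) + -s by ring, Real.rpow_add hx]
  gcongr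

theorem rpow_le_max_of_mem_Icc {m M x : ℝ} (r : ℝ) (hm : 0 < m) (hx : x ∈ Icc m M) :
    x ^ r ≤ max (m ^ r) (M ^ r) := by
  rcases le_total 0 r with hr | hr
  · exact le_max_of_le_right (Real.rpow_le_rpow (hm.le.trans hx.1) hx.2 hr)
  · exact le_max_of_le_left (Real.rpow_le_rpow_of_nonpos hm hx.1 hr)

theorem exists_sin_half_rpow_le (a : ℝ) :
    ∃ c, 0 < c ∧ ∀ θ ∈ Ioc 0 π, sin (θ / 2) ^ a ≤ c * θ ^ a := by
  refine ⟨max ((1 / π) ^ a) ((1 / 2) ^ a), by positivity, fun θ ⟨hθ0, hθπ⟩ => ?_⟩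
  -- Jordan's inequality and `sin x ≤ x` on `[0, π/2]`
  have hsin : sin (θ / 2) ∈ Icc (θ * (1 / π)) (θ * (1 / 2)) := by
    constructor
    · have := Real.mul_le_sin (x := θ / 2) (by linarith) (by linarith)
      calc θ * (1 / π) = 2 / π * (θ / 2) := by ring
        _ ≤ _ := this
    · linarith [Real.sin_le (x := θ / 2) (by linarith)]
  calc sin (θ / 2) ^ a ≤ max ((θ * (1 / π)) ^ a) ((θ * (1 / 2)) ^ a) :=
        rpow_le_max_of_mem_Icc a (by positivity) hsin
    _ = _ := by
        rw [Real.mul_rpow hθ0.le (by positivity), Real.mul_rpow hθ0.le (by positivity),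
          ← mul_max_of_nonneg _ _ (by positivity), mul_comm]

theorem rpow_neg_mul_rpow_neg_le {x d L u v s : ℝ} (hx : 0 < x) (hxL : x ≤ L) (hd : 0 < d)
    (hdL : d ≤ L) (hu : 0 ≤ u) (hus : u ≤ s) (huvs : u + v ≤ s) :
    x ^ (-u) * d ^ (-v) ≤ L ^ (s - u - v) * (x ^ (-s) + d ^ (-s)) := by
  have hL : 0 < L := hx.trans_le hxL
  rcases le_or_gt v 0 with hv | hv
  · calc x ^ (-u) * d ^ (-v) ≤ (L ^ (s - u) * x ^ (-s)) * L ^ (-v) := by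
          gcongr
          · exact rpow_neg_le_mul_rpow_neg hx hxL hus
          · linarith
      _ = L ^ (s - u - v) * x ^ (-s) := by
          rw [sub_eq_add_neg (s - u), Real.rpow_add hL]; ring
      _ ≤ _ := by gcongr; exact le_add_of_nonneg_right (by positivity)
  · have hm : 0 < min x d := lt_min hx hd
    calc x ^ (-u) * d ^ (-v) ≤ min x d ^ (-u) * min x d ^ (-v) := by
          gcongr ?_ * ?_
          · exact Real.rpow_le_rpow_of_nonpos hm (min_le_left _ _) (by linarith)
          · exact Real.rpow_le_rpow_of_nonpos hm (min_le_right _ _) (by linarith)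
      _ = min x d ^ (-(u + v)) := by rw [← Real.rpow_add hm]; ring_nf
      _ ≤ L ^ (s - (u + v)) * min x d ^ (-s) :=
          rpow_neg_le_mul_rpow_neg hm ((min_le_left _ _).trans hxL) huvs
      _ ≤ _ := by
          rw [sub_sub]
          gcongr
          rcases min_choice x d with h | h <;> rw [h]
          · exact le_add_of_nonneg_right (by positivity)
          · exact le_add_of_nonneg_left (by positivity)

theorem exists_add_rpow_mul_rpow_mul_abs_sub_rpow_le {L e q ρ s : ℝ} (hL : 0 < L) (he : -1 ≤ e)
    (hq : 1 ≤ q) (hρ : 0 < ρ) (hρs : ρ ≤ s) (heρs : e * (q - 1) + ρ ≤ s) (hes : -e ≤ s) :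
    ∃ C, 0 < C ∧ ∀ x ∈ Ioc 0 L, ∀ y ∈ Ioc 0 L,
      (x + y) ^ (-e * q) * x ^ e * |x - y| ^ (-ρ) ≤ C * (x ^ (-s) + |x - y| ^ (-s)) := by
  suffices ∃ C, 0 < C ∧ ∀ x y, 0 < x → x ≤ L → 0 < y → y ≤ L → x ≠ y →
      (x + y) ^ (-e * q) * x ^ e * |x - y| ^ (-ρ) ≤ C * (x ^ (-s) + |x - y| ^ (-s)) by
    obtain ⟨C, hC, h⟩ := this
    refine ⟨C, hC, fun x ⟨hx0, hxL⟩ y ⟨hy0, hyL⟩ => ?_⟩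
    rcases eq_or_ne x y with rfl | hxy
    · rw [sub_self, abs_zero, Real.zero_rpow (neg_ne_zero.2 hρ.ne'), mul_zero]
      positivity
    exact h x y hx0 hxL hy0 hyL hxy
  have hdist : ∀ x y, 0 < x → x ≤ L → 0 < y → y ≤ L → |x - y| ≤ L := fun x y _ _ _ _ => by
    rw [abs_sub_le_iff]; constructor <;> linarith
  rcases le_or_gt 0 e with he0 | he0
  · refine ⟨L ^ (s - e * (q - 1) - ρ), by positivity, fun x y hx0 hxL hy0 hyL hxy => ?_⟩
    have hd : 0 < |x - y| := abs_pos.2 (sub_ne_zero.2 hxy)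
    calc (x + y) ^ (-e * q) * x ^ e * |x - y| ^ (-ρ) ≤ x ^ (-e * q) * x ^ e * |x - y| ^ (-ρ) := by
          gcongr ?_ * _ * _
          refine Real.rpow_le_rpow_of_nonpos hx0 (le_add_of_nonneg_right hy0.le) ?_
          nlinarith
      _ = x ^ (-(e * (q - 1))) * |x - y| ^ (-ρ) := by rw [← Real.rpow_add hx0]; ring_nf
      _ ≤ _ := rpow_neg_mul_rpow_neg_le hx0 hxL hd (hdist x y hx0 hxL hy0 hyL) (by nlinarith)
          (by linarith) heρs
  · obtain ⟨p, rfl⟩ : ∃ p, e = -p := ⟨-e, (neg_neg e).symm⟩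
    rw [neg_neg] at hes
    have hp0 : 0 < p := by linarith
    refine ⟨(2 * L) ^ (p * (q - 1)) * ((2 ^ p + 1) * L ^ (s - ρ)), by positivity,
      fun x y hx0 hxL hy0 hyL hxy => ?_⟩
    have hdL := hdist x y hx0 hxL hy0 hyL
    set d := |x - y|
    have hd : 0 < d := abs_pos.2 (sub_ne_zero.2 hxy)
    have hxy : x + y ≤ 2 * x + d := by linarith [le_abs_self (y - x), abs_sub_comm x y]
    have hsplit : x ^ p * x ^ (-p) = 1 := by rw [← Real.rpow_add hx0]; simp
    have hmerge : d ^ p * d ^ (-ρ) = d ^ (-(ρ - p)) := by rw [← Real.rpow_add hd]; ring_nf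
    calc (x + y) ^ (-(-p) * q) * x ^ (-p) * d ^ (-ρ)
        = (x + y) ^ (p * (q - 1)) * ((x + y) ^ p * x ^ (-p) * d ^ (-ρ)) := by
          rw [neg_neg, show p * q = p * (q - 1) + p by ring, Real.rpow_add (by linarith)]
          ring
      _ ≤ (2 * L) ^ (p * (q - 1)) * (((2 * x) ^ p + d ^ p) * x ^ (-p) * d ^ (-ρ)) := by
          gcongr ?_ * (?_ * _ * _)
          · refine Real.rpow_le_rpow ?_ ?_ ?_ <;> nlinarith
          · refine (Real.rpow_le_rpow ?_ hxy hp0.le).trans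
              (Real.rpow_add_le_add_rpow ?_ hd.le hp0.le ?_) <;> linarith
      _ = (2 * L) ^ (p * (q - 1))
            * (2 ^ p * (x ^ (-0 : ℝ) * d ^ (-ρ)) + x ^ (-p) * d ^ (-(ρ - p))) := by
          rw [Real.mul_rpow (by norm_num) hx0.le, neg_zero, Real.rpow_zero, ← hmerge]
          linear_combination (2 * L) ^ (p * (q - 1)) * 2 ^ p * d ^ (-ρ) * hsplit
      _ ≤ (2 * L) ^ (p * (q - 1)) * (2 ^ p * (L ^ (s - 0 - ρ) * (x ^ (-s) + d ^ (-s)))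
            + L ^ (s - p - (ρ - p)) * (x ^ (-s) + d ^ (-s))) := by
          gcongr _ * (_ * ?_ + ?_)
          · exact rpow_neg_mul_rpow_neg_le hx0 hxL hd hdL le_rfl (by linarith) (by linarith)
          · exact rpow_neg_mul_rpow_neg_le hx0 hxL hd hdL hp0.le hes (by linarith)
      _ = _ := by rw [sub_zero, sub_sub_sub_cancel_right]; ring

theorem lintegral_Icc_rpow_neg {L s : ℝ} (hL : 0 ≤ L) (hs : s < 1) :
    ∫⁻ t in Icc 0 L, ENNReal.ofReal (t ^ (-s)) = ENNReal.ofReal (L ^ (1 - s) / (1 - s)) := by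
  have hint : IntegrableOn (fun t : ℝ => t ^ (-s)) (Icc 0 L) := by
    rw [integrableOn_Icc_iff_integrableOn_Ioc]
    exact (intervalIntegrable_iff_integrableOn_Ioc_of_le hL).1
      (intervalIntegral.intervalIntegrable_rpow' (by linarith))
  rw [← ofReal_integral_eq_lintegral_ofReal hint
    ((ae_restrict_iff' measurableSet_Icc).2 (.of_forall fun t ht => Real.rpow_nonneg ht.1 _)),
    integral_Icc_eq_integral_Ioc, ← intervalIntegral.integral_of_le hL,
    integral_rpow (Or.inl (by linarith)), Real.zero_rpow (by linarith), sub_zero, neg_add_eq_sub]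

theorem lintegral_Ioo_abs_sub_rpow_neg_le {L c s : ℝ} (hs : s < 1) (hc : c ∈ Icc 0 L) :
    ∫⁻ θ in Ioo 0 L, ENNReal.ofReal (|θ - c| ^ (-s))
      ≤ 2 * ENNReal.ofReal (L ^ (1 - s) / (1 - s)) := by
  set G : ℝ → ℝ≥0∞ := (Icc 0 L).indicator fun t => ENNReal.ofReal (t ^ (-s))
  have hG : Measurable G := Measurable.indicator (by fun_prop) measurableSet_Icc
  have hGeq : ∀ t ∈ Icc 0 L, G t = ENNReal.ofReal (t ^ (-s)) := fun t ht => indicator_of_mem ht _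
  -- fold the interval around `c` onto `[0, L]`
  have hfold : ∀ θ ∈ Ioo 0 L, ENNReal.ofReal (|θ - c| ^ (-s)) ≤ G (θ - c) + G (-(θ - c)) := by
    intro θ ⟨hθ0, hθL⟩
    rcases le_total 0 (θ - c) with h | h
    · rw [abs_of_nonneg h, ← hGeq _ ⟨h, by linarith [hc.1]⟩]
      exact le_self_add
    · rw [abs_of_nonpos h, ← hGeq _ ⟨by linarith, by linarith [hc.2]⟩]
      exact le_add_self
  calc ∫⁻ θ in Ioo 0 L, ENNReal.ofReal (|θ - c| ^ (-s))
      ≤ ∫⁻ θ in Ioo 0 L, (G (θ - c) + G (-(θ - c))) := setLIntegral_mono (by fun_prop) hfold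
    _ ≤ ∫⁻ θ, (G (θ - c) + G (-(θ - c))) := setLIntegral_le_lintegral _ _
    _ = (∫⁻ t, G t) + ∫⁻ t, G (-t) := by
        rw [lintegral_add_left (by fun_prop), lintegral_sub_right_eq_self G c,
          lintegral_sub_right_eq_self (fun t => G (-t)) c]
    _ = 2 * ENNReal.ofReal (L ^ (1 - s) / (1 - s)) := by
        rw [lintegral_neg_eq_self, two_mul, lintegral_indicator measurableSet_Icc,
          lintegral_Icc_rpow_neg (hc.1.trans hc.2) hs]

noncomputable def jacobiWeight (α β θ : ℝ) : ℝ :=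
  sin (θ / 2) ^ (2 * α + 1) * cos (θ / 2) ^ (2 * β + 1)

/-- The kernel `K₆` of the paper. -/
noncomputable def singularKernel (α β σ θ φ : ℝ) : ℝ :=
  (θ + φ) ^ (-2 * α - 1) * (2 * π - θ - φ) ^ (-2 * β - 1) * |θ - φ| ^ (2 * σ - 1)

theorem jacobiWeight_nonneg (α β : ℝ) {θ : ℝ} (hθ : θ ∈ Icc 0 π) : 0 ≤ jacobiWeight α β θ :=
  mul_nonneg (Real.rpow_nonneg (sin_nonneg_of_nonneg_of_le_pi (by linarith [hθ.1])
    (by linarith [hθ.2, pi_pos])) _)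
    (Real.rpow_nonneg (cos_nonneg_of_mem_Icc ⟨by linarith [hθ.1, pi_pos], by linarith [hθ.2]⟩) _)

theorem jacobiWeight_pi_sub (α β θ : ℝ) : jacobiWeight β α (π - θ) = jacobiWeight α β θ := by
  rw [jacobiWeight, jacobiWeight, show (π - θ) / 2 = π / 2 - θ / 2 by ring, sin_pi_div_two_sub,
    cos_pi_div_two_sub, mul_comm]

theorem singularKernel_pi_sub (α β σ θ φ : ℝ) :
    singularKernel β α σ (π - θ) (π - φ) = singularKernel α β σ θ φ := by
  rw [singularKernel, singularKernel, show π - θ + (π - φ) = 2 * π - θ - φ by ring,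
    show 2 * π - (π - θ) - (π - φ) = θ + φ by ring, show π - θ - (π - φ) = -(θ - φ) by ring,
    abs_neg, mul_comm ((2 * π - θ - φ) ^ _)]

theorem singularKernel_nonneg (α β σ : ℝ) {θ φ : ℝ} (hθ : θ ∈ Icc 0 π) (hφ : φ ∈ Icc 0 π) :
    0 ≤ singularKernel α β σ θ φ := by
  have : 0 ≤ θ + φ := by linarith [hθ.1, hφ.1]
  have : 0 ≤ 2 * π - θ - φ := by linarith [hθ.2, hφ.2]
  unfold singularKernel
  positivity

theorem singularKernel_rpow (α β σ q : ℝ) {θ φ : ℝ} (hθ : θ ∈ Icc 0 π) (hφ : φ ∈ Icc 0 π) :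
    singularKernel α β σ θ φ ^ q = (θ + φ) ^ (-(2 * α + 1) * q)
      * (2 * π - θ - φ) ^ (-(2 * β + 1) * q) * |θ - φ| ^ (-((1 - 2 * σ) * q)) := by
  have h₁ : 0 ≤ θ + φ := by linarith [hθ.1, hφ.1]
  have h₂ : 0 ≤ 2 * π - θ - φ := by linarith [hθ.2, hφ.2]
  rw [singularKernel, Real.mul_rpow (by positivity) (by positivity),
    Real.mul_rpow (by positivity) (by positivity), ← Real.rpow_mul h₁, ← Real.rpow_mul h₂,
    ← Real.rpow_mul (abs_nonneg _)]
  ring_nf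

theorem exists_jacobiWeight_mul_singularKernel_rpow_le_of_le_pi_div_two {α β σ q s : ℝ}
    (hα : -1 < α) (hq : 1 ≤ q) (hσ : σ < 1 / 2) (hρs : (1 - 2 * σ) * q ≤ s)
    (hαρs : (2 * α + 1) * (q - 1) + (1 - 2 * σ) * q ≤ s) (hαs : -(2 * α + 1) ≤ s) :
    ∃ C, 0 < C ∧ ∀ θ ∈ Ioc 0 (π / 2), ∀ φ ∈ Ioo 0 π,
      jacobiWeight α β θ * singularKernel α β σ θ φ ^ q ≤ C * (θ ^ (-s) + |θ - φ| ^ (-s)) := by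
  obtain ⟨C, hC, hsing⟩ := exists_add_rpow_mul_rpow_mul_abs_sub_rpow_le pi_pos
    (by linarith : -1 ≤ 2 * α + 1) hq (mul_pos (by linarith) (by linarith)) hρs hαρs hαs
  obtain ⟨c, hc, hsin⟩ := exists_sin_half_rpow_le (2 * α + 1)
  -- for `θ ≤ π / 2` the factors carrying `β` stay bounded
  set Mcos := max ((1 / 2 : ℝ) ^ (2 * β + 1)) (1 ^ (2 * β + 1))
  set Mfar := max ((π / 2) ^ (-(2 * β + 1) * q)) ((2 * π) ^ (-(2 * β + 1) * q))
  refine ⟨c * Mcos * Mfar * C, by positivity, fun θ ⟨hθ0, hθ⟩ φ ⟨hφ0, hφπ⟩ => ?_⟩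
  have hπ := pi_gt_three
  have hcos : cos (θ / 2) ^ (2 * β + 1) ≤ Mcos := by
    refine rpow_le_max_of_mem_Icc _ (by norm_num) ⟨?_, cos_le_one _⟩
    nlinarith [one_sub_sq_div_two_le_cos (x := θ / 2), pi_lt_d2]
  have hfar : (2 * π - θ - φ) ^ (-(2 * β + 1) * q) ≤ Mfar :=
    rpow_le_max_of_mem_Icc _ (by positivity) ⟨by linarith, by linarith⟩
  have hθI : θ ∈ Icc 0 π := ⟨hθ0.le, by linarith⟩
  have hφI : φ ∈ Icc 0 π := ⟨hφ0.le, hφπ.le⟩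
  rw [jacobiWeight, singularKernel_rpow α β σ q hθI hφI]
  calc sin (θ / 2) ^ (2 * α + 1) * cos (θ / 2) ^ (2 * β + 1) * ((θ + φ) ^ (-(2 * α + 1) * q)
        * (2 * π - θ - φ) ^ (-(2 * β + 1) * q) * |θ - φ| ^ (-((1 - 2 * σ) * q)))
      ≤ c * θ ^ (2 * α + 1) * Mcos * ((θ + φ) ^ (-(2 * α + 1) * q) * Mfar
          * |θ - φ| ^ (-((1 - 2 * σ) * q))) := by
        gcongr
        · rw [← singularKernel_rpow α β σ q hθI hφI]
          exact Real.rpow_nonneg (singularKernel_nonneg α β σ hθI hφI) _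
        · exact Real.rpow_nonneg (cos_nonneg_of_mem_Icc ⟨by linarith, by linarith⟩) _
        · exact hsin θ ⟨hθ0, by linarith⟩
    _ = c * Mcos * Mfar * ((θ + φ) ^ (-(2 * α + 1) * q) * θ ^ (2 * α + 1)
          * |θ - φ| ^ (-((1 - 2 * σ) * q))) := by ring
    _ ≤ c * Mcos * Mfar * (C * (θ ^ (-s) + |θ - φ| ^ (-s))) :=
        mul_le_mul_of_nonneg_left (hsing θ ⟨hθ0, by linarith⟩ φ ⟨hφ0, hφπ.le⟩)
          (by positivity)
    _ = _ := by ring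

theorem exists_jacobiWeight_mul_singularKernel_rpow_le {α β σ q δ : ℝ} (hα : -1 < α)
    (hβ : -1 < β) (hσ : σ < 1 / 2) (hq1 : 1 ≤ q) (hδα : α + 1 ≤ δ) (hδβ : β + 1 ≤ δ)
    (hδ : 1 / 2 ≤ δ) (hq : q < δ / (δ - σ)) :
    ∃ C s : ℝ, 0 < C ∧ s < 1 ∧ ∀ θ ∈ Ioo 0 π, ∀ φ ∈ Ioo 0 π,
      jacobiWeight α β θ * singularKernel α β σ θ φ ^ q
        ≤ C * (θ ^ (-s) + (π - θ) ^ (-s) + |θ - φ| ^ (-s)) := by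
  set ρ := (1 - 2 * σ) * q
  set s := max ((2 * δ - 1) * (q - 1) + ρ) (max (-(2 * α + 1)) (-(2 * β + 1)))
  -- this is exactly what the condition `q < δ / (δ - σ)` says
  have hexp : (2 * δ - 1) * (q - 1) + ρ < 1 := by
    have := (lt_div_iff₀ (by linarith : 0 < δ - σ)).1 hq
    linarith
  have hs : s < 1 := max_lt hexp (max_lt (by linarith) (by linarith))
  have hρs : ρ ≤ s := le_max_of_le_left (by nlinarith)
  obtain ⟨C₁, hC₁, h₁⟩ := exists_jacobiWeight_mul_singularKernel_rpow_le_of_le_pi_div_two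
    (β := β) hα hq1 hσ hρs (le_max_of_le_left (by nlinarith))
    (le_max_of_le_right (le_max_left _ _))
  obtain ⟨C₂, hC₂, h₂⟩ := exists_jacobiWeight_mul_singularKernel_rpow_le_of_le_pi_div_two
    (β := α) hβ hq1 hσ hρs (le_max_of_le_left (by nlinarith))
    (le_max_of_le_right (le_max_right _ _))
  refine ⟨C₁ + C₂, s, by positivity, hs, fun θ ⟨hθ0, hθπ⟩ φ ⟨hφ0, hφπ⟩ => ?_⟩
  have : 0 ≤ θ ^ (-s) := by positivity
  have : 0 ≤ (π - θ) ^ (-s) := Real.rpow_nonneg (by linarith) _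
  have : 0 ≤ |θ - φ| ^ (-s) := by positivity
  rcases le_or_gt θ (π / 2) with hθ | hθ
  · have := h₁ θ ⟨hθ0, hθ⟩ φ ⟨hφ0, hφπ⟩
    nlinarith
  · -- the reflection `θ ↦ π - θ` exchanges the roles of `α` and `β`
    have := h₂ (π - θ) ⟨by linarith, by linarith⟩ (π - φ) ⟨by linarith, by linarith⟩
    rw [jacobiWeight_pi_sub, singularKernel_pi_sub, show π - θ - (π - φ) = -(θ - φ) by ring,
      abs_neg] at this
    nlinarith

theorem measurable_singularKernel (α β σ : ℝ) :
    Measurable (Function.uncurry (singularKernel α β σ)) := by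
  unfold singularKernel Function.uncurry
  fun_prop

theorem jacobiMeasure_eq (α β : ℝ) : jacobiMeasure α β
    = (volume.restrict (Ioo 0 π)).withDensity fun θ => ENNReal.ofReal (jacobiWeight α β θ) :=
  rfl

instance (α β : ℝ) : SFinite (jacobiMeasure α β) := by
  rw [jacobiMeasure_eq]
  infer_instance

theorem ae_jacobiMeasure_mem_Ioo (α β : ℝ) : ∀ᵐ θ ∂jacobiMeasure α β, θ ∈ Ioo 0 π :=
  (withDensity_absolutelyContinuous _ _).ae_le (ae_restrict_mem measurableSet_Ioo)

theorem lintegral_jacobiMeasure (α β : ℝ) {f : ℝ → ℝ≥0∞} (hf : Measurable f) :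
    ∫⁻ θ, f θ ∂jacobiMeasure α β = ∫⁻ θ in Ioo 0 π, ENNReal.ofReal (jacobiWeight α β θ) * f θ := by
  rw [jacobiMeasure_eq,
    lintegral_withDensity_eq_lintegral_mul _ (by unfold jacobiWeight; fun_prop) hf]
  rfl

theorem exists_lintegral_singularKernel_rpow_le {α β σ q δ : ℝ} (hα : -1 < α) (hβ : -1 < β)
    (hσ : σ < 1 / 2) (hq1 : 1 ≤ q) (hδα : α + 1 ≤ δ) (hδβ : β + 1 ≤ δ) (hδ : 1 / 2 ≤ δ)
    (hq : q < δ / (δ - σ)) :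
    ∃ C, 0 < C ∧ ∀ φ ∈ Ioo 0 π,
      ∫⁻ θ, ENNReal.ofReal (singularKernel α β σ θ φ ^ q) ∂jacobiMeasure α β
        ≤ ENNReal.ofReal C := by
  obtain ⟨C, s, hC, hs, hbound⟩ :=
    exists_jacobiWeight_mul_singularKernel_rpow_le hα hβ hσ hq1 hδα hδβ hδ hq
  have hs' : 0 < 1 - s := by linarith
  refine ⟨C * (6 * (π ^ (1 - s) / (1 - s))), by positivity, fun φ hφ => ?_⟩
  have hpt : ∀ θ ∈ Ioo 0 π,
      ENNReal.ofReal (jacobiWeight α β θ) * ENNReal.ofReal (singularKernel α β σ θ φ ^ q)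
        ≤ ENNReal.ofReal C * (ENNReal.ofReal (|θ - 0| ^ (-s)) + ENNReal.ofReal (|θ - π| ^ (-s))
          + ENNReal.ofReal (|θ - φ| ^ (-s))) := by
    intro θ hθ
    have h₀ : 0 ≤ θ ^ (-s) := Real.rpow_nonneg hθ.1.le _
    have hπ : 0 ≤ (π - θ) ^ (-s) := Real.rpow_nonneg (sub_pos.2 hθ.2).le _
    rw [sub_zero, abs_of_pos hθ.1, abs_sub_comm, abs_of_pos (sub_pos.2 hθ.2),
      ← ENNReal.ofReal_add h₀ hπ, ← ENNReal.ofReal_add (add_nonneg h₀ hπ) (by positivity),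
      ← ENNReal.ofReal_mul hC.le,
      ← ENNReal.ofReal_mul (jacobiWeight_nonneg α β ⟨hθ.1.le, hθ.2.le⟩)]
    exact ENNReal.ofReal_le_ofReal (hbound θ hθ φ hφ)
  have hI : ∀ c ∈ Icc 0 π, ∫⁻ θ in Ioo 0 π, ENNReal.ofReal (|θ - c| ^ (-s))
      ≤ 2 * ENNReal.ofReal (π ^ (1 - s) / (1 - s)) := fun c hc =>
    lintegral_Ioo_abs_sub_rpow_neg_le (by linarith) hc
  rw [lintegral_jacobiMeasure α β
    ((measurable_singularKernel α β σ).of_uncurry_right.pow_const q).ennreal_ofReal]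
  calc _ ≤ ∫⁻ θ in Ioo 0 π, ENNReal.ofReal C * (ENNReal.ofReal (|θ - 0| ^ (-s))
          + ENNReal.ofReal (|θ - π| ^ (-s)) + ENNReal.ofReal (|θ - φ| ^ (-s))) :=
        setLIntegral_mono (by fun_prop) hpt
    _ = ENNReal.ofReal C * ((∫⁻ θ in Ioo 0 π, ENNReal.ofReal (|θ - 0| ^ (-s)))
          + (∫⁻ θ in Ioo 0 π, ENNReal.ofReal (|θ - π| ^ (-s)))
          + ∫⁻ θ in Ioo 0 π, ENNReal.ofReal (|θ - φ| ^ (-s))) := by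
        rw [lintegral_const_mul _ (by fun_prop), lintegral_add_left (by fun_prop),
          lintegral_add_left (by fun_prop)]
    _ ≤ ENNReal.ofReal C * (2 * ENNReal.ofReal (π ^ (1 - s) / (1 - s))
          + 2 * ENNReal.ofReal (π ^ (1 - s) / (1 - s))
          + 2 * ENNReal.ofReal (π ^ (1 - s) / (1 - s))) := by
        gcongr
        · exact hI 0 ⟨le_rfl, pi_pos.le⟩
        · exact hI π ⟨pi_pos.le, le_rfl⟩
        · exact hI φ ⟨hφ.1.le, hφ.2.le⟩
    _ = _ := by
        rw [ENNReal.ofReal_mul hC.le, ENNReal.ofReal_mul (by norm_num), ENNReal.ofReal_ofNat]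
        ring

theorem stmt17_general (α β σ q : ℝ) (hα : -1 < α) (hβ : -1 < β) (hσ : σ < 1/2)
    (hq1 : 1 ≤ q)
    (hq : q < max (max (α + 1) (β + 1)) (1/2) / (max (max (α + 1) (β + 1)) (1/2) - σ)) :
    (∃ C : ℝ, 0 < C ∧ ∀ φ ∈ Set.Ioo (0 : ℝ) π,
      (∫⁻ θ, ENNReal.ofReal
          (((θ + φ) ^ (-2 * α - 1) * (2 * π - θ - φ) ^ (-2 * β - 1) * |θ - φ| ^ (2 * σ - 1)) ^ q)
        ∂(jacobiMeasure α β)) ≤ ENNReal.ofReal C) ∧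
    (∃ C : ℝ, 0 < C ∧ ∀ f : ℝ → ℝ, Integrable f (jacobiMeasure α β) →
      eLpNorm (fun θ => ∫ φ,
            ((θ + φ) ^ (-2 * α - 1) * (2 * π - θ - φ) ^ (-2 * β - 1) * |θ - φ| ^ (2 * σ - 1)) * f φ
          ∂(jacobiMeasure α β)) (ENNReal.ofReal q) (jacobiMeasure α β)
        ≤ ENNReal.ofReal (C * ∫ φ, |f φ| ∂(jacobiMeasure α β))) := by
  obtain ⟨C, hC, hbound⟩ := exists_lintegral_singularKernel_rpow_le hα hβ hσ hq1
    ((le_max_left _ _).trans (le_max_left _ _)) ((le_max_right _ _).trans (le_max_left _ _))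
    (le_max_right _ _) hq
  refine ⟨⟨C, hC, hbound⟩, C ^ (1 / q), by positivity, fun f hf => ?_⟩
  have hK : ∀ᵐ φ ∂jacobiMeasure α β,
      ∫⁻ θ, ‖singularKernel α β σ θ φ‖ₑ ^ q ∂jacobiMeasure α β ≤ ENNReal.ofReal C := by
    filter_upwards [ae_jacobiMeasure_mem_Ioo α β] with φ hφ
    refine le_of_eq_of_le (lintegral_congr_ae ?_) (hbound φ hφ)
    filter_upwards [ae_jacobiMeasure_mem_Ioo α β] with θ hθ
    have hK0 := singularKernel_nonneg α β σ (Ioo_subset_Icc_self hθ) (Ioo_subset_Icc_self hφ)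
    rw [enorm_of_nonneg hK0, ENNReal.ofReal_rpow_of_nonneg hK0 (by linarith)]
  calc _ ≤ ENNReal.ofReal C ^ (1 / q) * ∫⁻ φ, ‖f φ‖ₑ ∂jacobiMeasure α β :=
        eLpNorm_integral_mul_le (measurable_singularKernel α β σ) hf.aemeasurable hq1 hK
    _ = _ := by
        rw [← ofReal_integral_norm_eq_lintegral_enorm hf, ENNReal.ofReal_rpow_of_pos hC,
          ← ENNReal.ofReal_mul (by positivity)]
        rfl

theorem stmt17 (α β σ q : ℝ) (hα : -1 < α) (hβ : -1 < β) (hσ0 : 0 < σ) (hσ : σ < 1/2)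
    (hq1 : 1 ≤ q)
    (hq : q < max (max (α + 1) (β + 1)) (1/2) / (max (max (α + 1) (β + 1)) (1/2) - σ)) :
    (∃ C : ℝ, 0 < C ∧ ∀ φ ∈ Set.Ioo (0 : ℝ) π,
      (∫⁻ θ, ENNReal.ofReal
          (((θ + φ) ^ (-2 * α - 1) * (2 * π - θ - φ) ^ (-2 * β - 1) * |θ - φ| ^ (2 * σ - 1)) ^ q)
        ∂(jacobiMeasure α β)) ≤ ENNReal.ofReal C) ∧
    (∃ C : ℝ, 0 < C ∧ ∀ f : ℝ → ℝ, Integrable f (jacobiMeasure α β) →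
      eLpNorm (fun θ => ∫ φ,
            ((θ + φ) ^ (-2 * α - 1) * (2 * π - θ - φ) ^ (-2 * β - 1) * |θ - φ| ^ (2 * σ - 1)) * f φ
          ∂(jacobiMeasure α β)) (ENNReal.ofReal q) (jacobiMeasure α β)
        ≤ ENNReal.ofReal (C * ∫ φ, |f φ| ∂(jacobiMeasure α β))) :=
  stmt17_general α β σ q hα hβ hσ hq1 hq
end
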